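/- Normalisation of typable expressions: if Γ ⊢ e : t is derivable in λ•→ and t ≠ •^∞, then e reduces in zero or more weak head reduction steps to a (weak head) normal form. -/

import Mathlib

/-!
Step-indexed realizability. For a level `k` and a pseudo-type `t`, `⟦t⟧ₖ` is a set of expressions:
everything at level `0`, `⟦•t⟧ₖ₊₁ = ⟦t⟧ₖ`, and otherwise the expressions that have a weak head
normal form and whose projections, resp. applications to elements of `⟦A⟧ⱼ` for `j ≤ k`, lie in
the interpretations of the components. The recursion is well founded on guarded types: along a
path of a guarded tree the level never increases and drops at each `•`, which can therefore
happen only finitely often. Every typable expression, with its variables substituted by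
realizers, realizes its type at every level, and neutral terms (in particular variables) realize
every guarded type. A type `t ≠ •^∞` has the form `•ⁿ u` with `u` not headed by `•`, and
`⟦•ⁿ u⟧ₙ₊₁ = ⟦u⟧₁` consists of expressions with a normal form.
-/

namespace LambdaBullet

/-- Head constructors for pseudo-types. -/
inductive TyHead : Type
  | var (n : ℕ)
  | nat
  | prod
  | arrow
  | bullet

/-- Arity of each pseudo-type constructor. -/
def tyArity : TyHead → Type
  | .var _ => Empty
  | .nat => Empty
  | .prod => Bool
  | .arrow => Bool
  | .bullet => Unit

/-- The polynomial functor whose M-type is the type of pseudo-types. -/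
def TyP : PFunctor := ⟨TyHead, tyArity⟩

/-- Pseudo-types: possibly infinite coinductively generated trees. -/
abbrev PseudoType := TyP.M

/-- Type variable. -/
def tvar (n : ℕ) : PseudoType := PFunctor.M.mk ⟨TyHead.var n, Empty.elim⟩
/-- The type `Nat`. -/
def tnat : PseudoType := PFunctor.M.mk ⟨TyHead.nat, Empty.elim⟩
/-- Product type. -/
def tprod (t s : PseudoType) : PseudoType :=
  PFunctor.M.mk ⟨TyHead.prod, fun b => bif b then s else t⟩
/-- Arrow type. -/
def tarrow (t s : PseudoType) : PseudoType :=
  PFunctor.M.mk ⟨TyHead.arrow, fun b => bif b then s else t⟩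
/-- Delay type `•t`. -/
def tbullet (t : PseudoType) : PseudoType :=
  PFunctor.M.mk ⟨TyHead.bullet, fun _ => t⟩
/-- Iterated delay `•ⁿ t`. -/
def tbulletN (n : ℕ) (t : PseudoType) : PseudoType := tbullet^[n] t

/-- `Child t s` holds iff `s` is an immediate subtree of `t`. -/
def Child (t s : PseudoType) : Prop := ∃ b : TyP.B t.dest.1, t.dest.2 b = s

/-- `Subtree t s` holds iff `s` is a subtree of `t`. -/
def Subtree (t s : PseudoType) : Prop := Relation.ReflTransGen Child t s

/-- A pseudo-type is regular if it has finitely many distinct subtrees. -/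
def Regular (t : PseudoType) : Prop := {s | Subtree t s}.Finite

/-- The root of the tree is a `•`. -/
def headIsBullet (t : PseudoType) : Prop := t.dest.1 = TyHead.bullet

/-- A pseudo-type is guarded if every infinite path in its tree has
infinitely many `•`'s. -/
def Guarded (t : PseudoType) : Prop :=
  ∀ f : ℕ → PseudoType, f 0 = t → (∀ n, Child (f n) (f (n + 1))) →
    ∀ N, ∃ n, N ≤ n ∧ headIsBullet (f n)

/-- A type is a regular and guarded pseudo-type. -/
def IsType (t : PseudoType) : Prop := Regular t ∧ Guarded t

/-- `•^∞`: the unique pseudo-type satisfying `•^∞ = • •^∞`. -/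
def binf : PseudoType := PFunctor.M.corec (fun _ : Unit => ⟨TyHead.bullet, fun _ => ()⟩) ()

/-- Constants. -/
inductive Const : Type
  | pair
  | cfst
  | csnd
  | zero
  | succ

/-- Expressions (with de Bruijn indices for variables). -/
inductive Expr : Type
  | var (x : ℕ)
  | const (k : Const)
  | lam (e : Expr)
  | app (e₁ e₂ : Expr)

def liftRen (f : ℕ → ℕ) : ℕ → ℕ
  | 0 => 0
  | n + 1 => f n + 1

def rename (f : ℕ → ℕ) : Expr → Expr
  | .var n => .var (f n)
  | .const k => .const k
  | .lam e => .lam (rename (liftRen f) e)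
  | .app a b => .app (rename f a) (rename f b)

def liftSub (ρ : ℕ → Expr) : ℕ → Expr
  | 0 => .var 0
  | n + 1 => rename Nat.succ (ρ n)

/-- Simultaneous (capture-avoiding) substitution. -/
def substE (ρ : ℕ → Expr) : Expr → Expr
  | .var n => ρ n
  | .const k => .const k
  | .lam e => .lam (substE (liftSub ρ) e)
  | .app a b => .app (substE ρ a) (substE ρ b)

/-- `subst0 e f` is `e[f/x]` for the topmost variable `x`. -/
def subst0 (e f : Expr) : Expr :=
  substE (fun n => match n with | 0 => f | n + 1 => .var n) e

/-- The pair `⟨e₁, e₂⟩`. -/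
def mkPair (e₁ e₂ : Expr) : Expr := .app (.app (.const .pair) e₁) e₂

/-- Evaluation contexts E ::= [] | E e | fst E | snd E | succ E. -/
inductive ECtx : Type
  | hole
  | app (E : ECtx) (e : Expr)
  | fst (E : ECtx)
  | snd (E : ECtx)
  | succ (E : ECtx)

/-- Plugging an expression into an evaluation context. -/
def ECtx.plug : ECtx → Expr → Expr
  | .hole, e => e
  | .app E f, e => .app (E.plug e) f
  | .fst E, e => .app (.const .cfst) (E.plug e)
  | .snd E, e => .app (.const .csnd) (E.plug e)
  | .succ E, e => .app (.const .succ) (E.plug e)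

/-- Head reduction rules. -/
inductive HeadRed : Expr → Expr → Prop
  | beta (e f) : HeadRed (.app (.lam e) f) (subst0 e f)
  | fst (e₁ e₂) : HeadRed (.app (.const .cfst) (mkPair e₁ e₂)) e₁
  | snd (e₁ e₂) : HeadRed (.app (.const .csnd) (mkPair e₁ e₂)) e₂

/-- Weak head (call-by-name) reduction: head rules closed under evaluation contexts. -/
def Red (a b : Expr) : Prop :=
  ∃ (E : ECtx) (e f : Expr), HeadRed e f ∧ a = E.plug e ∧ b = E.plug f

/-- Many-step reduction. -/
def RedStar : Expr → Expr → Prop := Relation.ReflTransGen Red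

/-- (Weak head) normal forms. -/
def NormalForm (e : Expr) : Prop := ∀ f, ¬ Red e f

/-- Typing contexts: finite maps from (de Bruijn) variables to types. -/
def Ctx : Type := ℕ → Option PseudoType

/-- Extending a typing context with a type for the topmost variable. -/
def Ctx.cons (t : PseudoType) (Γ : Ctx) : Ctx :=
  fun n => match n with | 0 => some t | n + 1 => Γ n

/-- The type assignment κ for constants. -/
inductive KappaTy : Const → PseudoType → Prop
  | pair {t s} : IsType t → IsType s →
      KappaTy .pair (tarrow t (tarrow s (tprod t s)))
  | fst {t s} : IsType t → IsType s →
      KappaTy .cfst (tarrow (tprod t s) t)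
  | snd {t s} : IsType t → IsType s →
      KappaTy .csnd (tarrow (tprod t s) s)
  | zero : KappaTy .zero tnat
  | succ : KappaTy .succ (tarrow tnat tnat)

/-- The type assignment system λ•→. -/
inductive Types : Ctx → Expr → PseudoType → Prop
  | ax {Γ x t} : Γ x = some t → IsType t → Types Γ (.var x) t
  | const {Γ k t} : KappaTy k t → Types Γ (.const k) t
  | bulletI {Γ e t} : Types Γ e t → Types Γ e (tbullet t)
  | arrowI {Γ e n t s} :
      Types (Ctx.cons (tbulletN n t) Γ) e (tbulletN n s) →
      Types Γ (.lam e) (tbulletN n (tarrow t s))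
  | arrowE {Γ e₁ e₂ n t s} :
      Types Γ e₁ (tbulletN n (tarrow t s)) → Types Γ e₂ (tbulletN n t) →
      Types Γ (.app e₁ e₂) (tbulletN n s)

section PseudoTypes

lemma pseudoType_cases (t : PseudoType) :
    (∃ n, t = tvar n) ∨ t = tnat ∨ (∃ A B, t = tprod A B) ∨
      (∃ A B, t = tarrow A B) ∨ ∃ u, t = tbullet u := by
  rw [← PFunctor.M.mk_dest t]
  obtain ⟨a, ch⟩ := t.dest
  have bool_fun {A B : PseudoType} {g : Bool → PseudoType} (hA : g false = A) (hB : g true = B) :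
      g = fun b => bif b then B else A := by
    funext b; cases b <;> assumption
  cases a
  · exact .inl ⟨_, congrArg _ (congrArg _ (funext nofun))⟩
  · exact .inr <| .inl <| congrArg _ (congrArg _ (funext nofun))
  · exact .inr <| .inr <| .inl ⟨_, _, congrArg _ (congrArg _ (bool_fun rfl rfl))⟩
  · exact .inr <| .inr <| .inr <| .inl ⟨_, _, congrArg _ (congrArg _ (bool_fun rfl rfl))⟩
  · exact .inr <| .inr <| .inr <| .inr ⟨_, congrArg _ (congrArg _ (funext fun () => rfl))⟩

lemma tprod_inj {A B A' B' : PseudoType} (h : tprod A B = tprod A' B') : A = A' ∧ B = B' := by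
  have hch := eq_of_heq (Sigma.mk.inj (PFunctor.M.mk_inj h)).2
  exact ⟨congrFun hch false, congrFun hch true⟩

lemma tarrow_inj {A B A' B' : PseudoType} (h : tarrow A B = tarrow A' B') :
    A = A' ∧ B = B' := by
  have hch := eq_of_heq (Sigma.mk.inj (PFunctor.M.mk_inj h)).2
  exact ⟨congrFun hch false, congrFun hch true⟩

lemma tbullet_inj {u u' : PseudoType} (h : tbullet u = tbullet u') : u = u' :=
  congrFun (eq_of_heq (Sigma.mk.inj (PFunctor.M.mk_inj h)).2) ()

lemma tbulletN_succ (n : ℕ) (t : PseudoType) :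
    tbulletN (n + 1) t = tbullet (tbulletN n t) :=
  Function.iterate_succ_apply' _ _ _

lemma child_of_dest_eq {t : PseudoType} {x : TyP PseudoType} (h : t.dest = x) (b : TyP.B x.1) :
    Child t (x.2 b) := by
  subst h
  exact ⟨b, rfl⟩

lemma child_tbullet (u : PseudoType) : Child (tbullet u) u := ⟨(), rfl⟩
lemma child_tprod_left (A B : PseudoType) : Child (tprod A B) A := ⟨false, rfl⟩
lemma child_tprod_right (A B : PseudoType) : Child (tprod A B) B := ⟨true, rfl⟩
lemma child_tarrow_left (A B : PseudoType) : Child (tarrow A B) A := ⟨false, rfl⟩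
lemma child_tarrow_right (A B : PseudoType) : Child (tarrow A B) B := ⟨true, rfl⟩

lemma Guarded.child {t u : PseudoType} (ht : Guarded t) (hc : Child t u) : Guarded u := by
  intro f hf0 hf N
  obtain ⟨_ | m, hm, hb⟩ := ht (fun | 0 => t | n + 1 => f n) rfl
    (fun | 0 => (hf0 ▸ hc : Child t (f 0)) | n + 1 => hf n) (N + 1)
  · omega
  · exact ⟨m, by omega, hb⟩

lemma guarded_of_forall_child {t : PseudoType} (h : ∀ u, Child t u → Guarded u) : Guarded t := by
  intro f hf0 hf N
  obtain ⟨m, hm, hb⟩ := h (f 1) (hf0 ▸ hf 0) (fun n => f (n + 1)) rfl (fun n => hf (n + 1)) N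
  exact ⟨m + 1, by omega, hb⟩

lemma guarded_tnat : Guarded tnat := guarded_of_forall_child fun _ ⟨b, _⟩ => b.elim

lemma guarded_tvar (n : ℕ) : Guarded (tvar n) := guarded_of_forall_child fun _ ⟨b, _⟩ => b.elim

lemma guarded_tprod {A B : PseudoType} (hA : Guarded A) (hB : Guarded B) :
    Guarded (tprod A B) :=
  guarded_of_forall_child fun _ ⟨b, hb⟩ => by cases b <;> (subst hb; assumption)

lemma Guarded.of_tbulletN {n : ℕ} {t : PseudoType} (h : Guarded (tbulletN n t)) : Guarded t := by
  induction n with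
  | zero => exact h
  | succ n ih => exact ih ((tbulletN_succ n t ▸ h).child (child_tbullet _))

lemma binf_dest : binf.dest = ⟨TyHead.bullet, fun _ => binf⟩ :=
  PFunctor.M.dest_corec _ _

lemma exists_eq_tbullet_of_headIsBullet {t : PseudoType} (h : headIsBullet t) :
    ∃ u, t = tbullet u := by
  rcases pseudoType_cases t with ⟨_, rfl⟩ | rfl | ⟨_, _, rfl⟩ | ⟨_, _, rfl⟩ | hu
  all_goals first | exact hu | cases h

lemma exists_eq_tbulletN_of_ne_binf {t : PseudoType} (hne : t ≠ binf) :
    ∃ n u, t = tbulletN n u ∧ ¬ headIsBullet u := by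
  by_contra! hall
  -- then every `•ⁿ`-prefix of `t` is followed by another `•`, so `t` is bisimilar to `•^∞`
  refine hne <|
    PFunctor.M.bisim (fun a b => b = binf ∧ ∃ n, t = tbulletN n a) ?_ t binf ⟨rfl, 0, rfl⟩
  rintro x _ ⟨rfl, n, hx⟩
  obtain ⟨u, rfl⟩ := exists_eq_tbullet_of_headIsBullet (hall n x hx)
  exact ⟨.bullet, fun _ => u, fun _ => binf, rfl, binf_dest,
    fun _ => ⟨rfl, n + 1, hx.trans (Function.iterate_succ_apply _ _ _).symm⟩⟩

end PseudoTypes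

section Reduction

def HasNormalForm (e : Expr) : Prop := ∃ f, RedStar e f ∧ NormalForm f

lemma Red.app {a b : Expr} (c : Expr) (h : Red a b) : Red (.app a c) (.app b c) := by
  obtain ⟨E, x, y, hr, rfl, rfl⟩ := h
  exact ⟨.app E c, x, y, hr, rfl, rfl⟩

lemma Red.fst {a b : Expr} (h : Red a b) :
    Red (.app (.const .cfst) a) (.app (.const .cfst) b) := by
  obtain ⟨E, x, y, hr, rfl, rfl⟩ := h
  exact ⟨.fst E, x, y, hr, rfl, rfl⟩

lemma Red.snd {a b : Expr} (h : Red a b) :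
    Red (.app (.const .csnd) a) (.app (.const .csnd) b) := by
  obtain ⟨E, x, y, hr, rfl, rfl⟩ := h
  exact ⟨.snd E, x, y, hr, rfl, rfl⟩

lemma Red.succ {a b : Expr} (h : Red a b) :
    Red (.app (.const .succ) a) (.app (.const .succ) b) := by
  obtain ⟨E, x, y, hr, rfl, rfl⟩ := h
  exact ⟨.succ E, x, y, hr, rfl, rfl⟩

lemma HeadRed.red {a b : Expr} (h : HeadRed a b) : Red a b := ⟨.hole, a, b, h, rfl, rfl⟩

inductive Step : Expr → Expr → Prop
  | head {a b : Expr} : HeadRed a b → Step a b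
  | app {a b : Expr} (c : Expr) : Step a b → Step (.app a c) (.app b c)
  | fst {a b : Expr} : Step a b → Step (.app (.const .cfst) a) (.app (.const .cfst) b)
  | snd {a b : Expr} : Step a b → Step (.app (.const .csnd) a) (.app (.const .csnd) b)
  | succ {a b : Expr} : Step a b → Step (.app (.const .succ) a) (.app (.const .succ) b)

lemma Red.step {a b : Expr} (h : Red a b) : Step a b := by
  obtain ⟨E, x, y, hr, rfl, rfl⟩ := h
  induction E with
  | hole => exact .head hr
  | app E c ih => exact .app c ih
  | fst E ih => exact .fst ih
  | snd E ih => exact .snd ih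
  | succ E ih => exact .succ ih

lemma Step.red {a b : Expr} (h : Step a b) : Red a b := by
  induction h with
  | head h => exact h.red
  | app c _ ih => exact ih.app c
  | fst _ ih => exact ih.fst
  | snd _ ih => exact ih.snd
  | succ _ ih => exact ih.succ

lemma not_step_const (k : Const) (b : Expr) : ¬ Step (.const k) b := by
  rintro (⟨⟨⟩⟩)

inductive Neutral : Expr → Prop
  | var (x : ℕ) : Neutral (.var x)
  | zero : Neutral (.const .zero)
  | app {e : Expr} (a : Expr) : Neutral e → Neutral (.app e a)
  | fst {e : Expr} : Neutral e → Neutral (.app (.const .cfst) e)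
  | snd {e : Expr} : Neutral e → Neutral (.app (.const .csnd) e)

lemma Neutral.ne_mkPair {e : Expr} (he : Neutral e) (a b : Expr) : e ≠ mkPair a b := by
  rintro rfl
  rcases he with _ | _ | ⟨_, _ | _ | ⟨_, ⟨⟩⟩⟩

lemma Neutral.not_step {e b : Expr} (he : Neutral e) : ¬ Step e b := by
  induction he generalizing b with
  | var x => rintro ⟨⟨⟩⟩
  | zero => exact not_step_const _ _
  | app a he ih =>
    rintro (⟨⟨⟩⟩ | ⟨_, h⟩ | ⟨h⟩ | ⟨h⟩ | ⟨h⟩)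
    all_goals first | exact ih h | cases he
  | fst he ih | snd he ih =>
    rintro (⟨⟨⟩⟩ | ⟨_, h⟩ | ⟨h⟩ | ⟨h⟩ | ⟨h⟩)
    all_goals first | exact ih h | exact he.ne_mkPair _ _ rfl | exact not_step_const _ _ h

lemma Neutral.normalForm {e : Expr} (he : Neutral e) : NormalForm e :=
  fun _ h => he.not_step h.step

lemma normalForm_lam (e : Expr) : NormalForm (.lam e) := by
  rintro _ hr
  rcases hr.step with ⟨⟨⟩⟩

lemma normalForm_const (k : Const) : NormalForm (.const k) :=
  fun _ h => not_step_const _ _ h.step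

lemma normalForm_pair_app (a : Expr) : NormalForm (.app (.const .pair) a) := by
  rintro _ hr
  rcases hr.step with ⟨⟨⟩⟩ | ⟨_, h⟩
  exact not_step_const _ _ h

lemma normalForm_mkPair (a b : Expr) : NormalForm (mkPair a b) := by
  rintro _ hr
  rcases hr.step with ⟨⟨⟩⟩ | ⟨_, ⟨⟨⟩⟩ | ⟨_, h⟩⟩
  exact not_step_const _ _ h

lemma NormalForm.succ {a : Expr} (ha : NormalForm a) : NormalForm (.app (.const .succ) a) := by
  rintro _ hr
  rcases hr.step with ⟨⟨⟩⟩ | ⟨_, h⟩ | _ | _ | ⟨h⟩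
  · exact not_step_const _ _ h
  · exact ha _ h.red

lemma NormalForm.hasNormalForm {e : Expr} (h : NormalForm e) : HasNormalForm e := ⟨e, .refl, h⟩

lemma HasNormalForm.of_red {e e' : Expr} (h : Red e e') (hw : HasNormalForm e') :
    HasNormalForm e := by
  obtain ⟨f, hf, hnf⟩ := hw
  exact ⟨f, .head h hf, hnf⟩

lemma HasNormalForm.succ {a : Expr} (ha : HasNormalForm a) :
    HasNormalForm (.app (.const .succ) a) := by
  obtain ⟨f, hf, hnf⟩ := ha
  exact ⟨_, Relation.ReflTransGen.lift (Expr.app (.const .succ)) (fun _ _ => Red.succ) _ _ hf,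
    hnf.succ⟩

end Reduction

section Substitution

lemma liftRen_comp (f g : ℕ → ℕ) : liftRen f ∘ liftRen g = liftRen (f ∘ g) := by
  funext n; cases n <;> rfl

lemma rename_rename (f g : ℕ → ℕ) (e : Expr) :
    rename f (rename g e) = rename (f ∘ g) e := by
  induction e generalizing f g with
  | var n => rfl
  | const k => rfl
  | lam e ih => simp only [rename, ih, liftRen_comp]
  | app a b iha ihb => simp only [rename, iha, ihb]

lemma substE_rename (σ : ℕ → Expr) (f : ℕ → ℕ) (e : Expr) :
    substE σ (rename f e) = substE (σ ∘ f) e := by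
  induction e generalizing σ f with
  | var n => rfl
  | const k => rfl
  | lam e ih =>
    have : liftSub σ ∘ liftRen f = liftSub (σ ∘ f) := by funext n; cases n <;> rfl
    simp only [rename, substE, ih, this]
  | app a b iha ihb => simp only [rename, substE, iha, ihb]

lemma rename_substE (f : ℕ → ℕ) (σ : ℕ → Expr) (e : Expr) :
    rename f (substE σ e) = substE (rename f ∘ σ) e := by
  induction e generalizing σ f with
  | var n => rfl
  | const k => rfl
  | lam e ih =>
    have : rename (liftRen f) ∘ liftSub σ = liftSub (rename f ∘ σ) := by
      funext n
      cases n with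
      | zero => rfl
      | succ n => simp only [Function.comp, liftSub, rename_rename]; rfl
    simp only [rename, substE, ih, this]
  | app a b iha ihb => simp only [rename, substE, iha, ihb]

lemma substE_substE (σ ρ : ℕ → Expr) (e : Expr) :
    substE σ (substE ρ e) = substE (substE σ ∘ ρ) e := by
  induction e generalizing σ ρ with
  | var n => rfl
  | const k => rfl
  | lam e ih =>
    have : substE (liftSub σ) ∘ liftSub ρ = liftSub (substE σ ∘ ρ) := by
      funext n
      cases n with
      | zero => rfl
      | succ n => simp only [Function.comp, liftSub, substE_rename, rename_substE]; rfl
    simp only [substE, ih, this]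
  | app a b iha ihb => simp only [substE, iha, ihb]

lemma substE_var (e : Expr) : substE .var e = e := by
  induction e with
  | var n => rfl
  | const k => rfl
  | lam e ih =>
    have : liftSub .var = .var := by funext n; cases n <;> rfl
    simp only [substE, this, ih]
  | app a b iha ihb => simp only [substE, iha, ihb]

def consSub (a : Expr) (ρ : ℕ → Expr) : ℕ → Expr
  | 0 => a
  | n + 1 => ρ n

lemma subst0_substE_liftSub (ρ : ℕ → Expr) (e a : Expr) :
    subst0 (substE (liftSub ρ) e) a = substE (consSub a ρ) e := by
  rw [subst0, substE_substE]
  congr 1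
  funext n
  cases n with
  | zero => rfl
  | succ n => exact (substE_rename _ _ _).trans (substE_var _)

end Substitution

section GuardedInterp

def GRel (q p : ℕ × PseudoType) : Prop :=
  Guarded p.2 ∧ Child p.2 q.2 ∧ q.1 ≤ p.1 ∧ (headIsBullet p.2 → q.1 < p.1)

theorem wellFounded_gRel : WellFounded GRel := by
  refine ⟨fun p => by_contra fun hp => ?_⟩
  obtain ⟨f, -, hf⟩ := not_acc_iff_exists_descending_chain.1 hp
  obtain ⟨N, hN⟩ := WellFoundedLT.antitone_chain_condition
    (f := fun n => (f n).1) (antitone_nat_of_succ_le fun n => (hf n).2.2.1)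
  -- past `N` the index is constant, so no more `•` may occur along the path, against guardedness
  obtain ⟨n, -, hb⟩ := (hf N).1 (fun m => (f (N + m)).2) rfl (fun m => (hf (N + m)).2.1) 0
  have := (hf (N + n)).2.2.2 hb
  have := hN (N + n) (by omega)
  have := hN (N + n + 1) (by omega)
  omega

lemma gRel_of_dest_eq {j k : ℕ} {t : PseudoType} {x : TyP PseudoType} (hg : Guarded t)
    (h : t.dest = x) (b : TyP.B x.1) (hjk : j ≤ k) (hlt : x.1 = .bullet → j < k) :
    GRel (j, x.2 b) (k, t) :=
  ⟨hg, child_of_dest_eq h b, hjk, fun hb => hlt (h ▸ hb)⟩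

@[elab_as_elim]
theorem Guarded.induction {motive : (k : ℕ) → (t : PseudoType) → Guarded t → Prop}
    (zero : ∀ t hg, motive 0 t hg)
    (var : ∀ k n hg, motive (k + 1) (tvar n) hg)
    (nat : ∀ k hg, motive (k + 1) tnat hg)
    (prod : ∀ k A B (hg : Guarded (tprod A B)), motive (k + 1) A (hg.child (child_tprod_left A B)) →
      motive (k + 1) B (hg.child (child_tprod_right A B)) → motive (k + 1) (tprod A B) hg)
    (arrow : ∀ k A B (hg : Guarded (tarrow A B)),
      (∀ j ≤ k + 1, motive j A (hg.child (child_tarrow_left A B))) →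
      (∀ j ≤ k + 1, motive j B (hg.child (child_tarrow_right A B))) →
      motive (k + 1) (tarrow A B) hg)
    (bullet : ∀ k u (hg : Guarded (tbullet u)), motive k u (hg.child (child_tbullet u)) →
      motive (k + 1) (tbullet u) hg)
    (k : ℕ) (t : PseudoType) (hg : Guarded t) : motive k t hg := by
  suffices ∀ p : ℕ × PseudoType, ∀ hg : Guarded p.2, motive p.1 p.2 hg from this (k, t) hg
  intro p
  induction p using wellFounded_gRel.induction with
  | _ p ih =>
  obtain ⟨_ | k, t⟩ := p
  · exact zero t
  intro hg
  rcases pseudoType_cases t with ⟨n, rfl⟩ | rfl | ⟨A, B, rfl⟩ | ⟨A, B, rfl⟩ | ⟨u, rfl⟩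
  · exact var k n hg
  · exact nat k hg
  · exact prod k A B hg (ih (k + 1, A) ⟨hg, child_tprod_left A B, le_rfl, nofun⟩ _)
      (ih (k + 1, B) ⟨hg, child_tprod_right A B, le_rfl, nofun⟩ _)
  · exact arrow k A B hg (fun j hj => ih (j, A) ⟨hg, child_tarrow_left A B, hj, nofun⟩ _)
      (fun j hj => ih (j, B) ⟨hg, child_tarrow_right A B, hj, nofun⟩ _)
  · exact bullet k u hg (ih (k, u) ⟨hg, child_tbullet u, k.le_succ, fun _ => k.lt_succ_self⟩ _)

-- The product already carries the lexicographic `WellFoundedRelation`; this synonym carries `GRel`.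
def Level : Type := ℕ × PseudoType

instance : WellFoundedRelation Level := ⟨GRel, wellFounded_gRel⟩

open scoped Classical in
/-- The paper's `⟦t⟧ₖ`, by recursion along `GRel`; it is only meaningful for guarded `t`. -/
def GuardedInterp (k : ℕ) (t : PseudoType) (e : Expr) : Prop :=
  if k = 0 then True
  else if Guarded t then
    match h : t.dest with
    | ⟨.var _, _⟩ | ⟨.nat, _⟩ => HasNormalForm e
    | ⟨.bullet, ch⟩ => GuardedInterp (k - 1) (ch ()) e
    | ⟨.prod, ch⟩ => HasNormalForm e ∧ GuardedInterp k (ch false) (.app (.const .cfst) e) ∧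
        GuardedInterp k (ch true) (.app (.const .csnd) e)
    | ⟨.arrow, ch⟩ => HasNormalForm e ∧ ∀ j ≤ k, ∀ a, GuardedInterp j (ch false) a →
        GuardedInterp j (ch true) (.app e a)
  else False
termination_by (show Level from (k, t))
decreasing_by
  · exact gRel_of_dest_eq ‹_› h () (Nat.sub_le k 1) fun _ => by omega
  · exact gRel_of_dest_eq ‹_› h false le_rfl nofun
  · exact gRel_of_dest_eq ‹_› h true le_rfl nofun
  · exact gRel_of_dest_eq ‹_› h false ‹_› nofun
  · exact gRel_of_dest_eq ‹_› h true ‹_› nofun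

lemma guardedInterp_zero (t : PseudoType) (e : Expr) : GuardedInterp 0 t e := by
  rw [GuardedInterp, if_pos rfl]
  trivial

lemma guardedInterp_tvar (k n : ℕ) (e : Expr) :
    GuardedInterp (k + 1) (tvar n) e ↔ HasNormalForm e := by
  rw [GuardedInterp, if_neg k.succ_ne_zero, if_pos (guarded_tvar n)]
  rfl

lemma guardedInterp_tnat (k : ℕ) (e : Expr) :
    GuardedInterp (k + 1) tnat e ↔ HasNormalForm e := by
  rw [GuardedInterp, if_neg k.succ_ne_zero, if_pos guarded_tnat]
  rfl

lemma guardedInterp_tbullet {k : ℕ} {u : PseudoType} (hg : Guarded (tbullet u)) (e : Expr) :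
    GuardedInterp (k + 1) (tbullet u) e ↔ GuardedInterp k u e := by
  rw [GuardedInterp, if_neg k.succ_ne_zero, if_pos hg]
  rfl

lemma guardedInterp_tprod {k : ℕ} {A B : PseudoType} (hg : Guarded (tprod A B)) (e : Expr) :
    GuardedInterp (k + 1) (tprod A B) e ↔ HasNormalForm e ∧
      GuardedInterp (k + 1) A (.app (.const .cfst) e) ∧
      GuardedInterp (k + 1) B (.app (.const .csnd) e) := by
  rw [GuardedInterp, if_neg k.succ_ne_zero, if_pos hg]
  rfl

lemma guardedInterp_tarrow {k : ℕ} {A B : PseudoType} (hg : Guarded (tarrow A B)) (e : Expr) :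
    GuardedInterp (k + 1) (tarrow A B) e ↔
      HasNormalForm e ∧ ∀ j ≤ k + 1, ∀ a, GuardedInterp j A a → GuardedInterp j B (.app e a) := by
  rw [GuardedInterp, if_neg k.succ_ne_zero, if_pos hg]
  rfl

end GuardedInterp

/-- The interpretation of arbitrary pseudo-types. Being an inductive predicate, it needs no
well-founded recursion, which is unavailable on unguarded types; this works because the domain of
an arrow, the only contravariant position, is interpreted by `GuardedInterp`. -/
inductive Interp : ℕ → PseudoType → Expr → Prop
  | zero (t : PseudoType) (e : Expr) : Interp 0 t e
  | var {k : ℕ} (n : ℕ) {e : Expr} : HasNormalForm e → Interp (k + 1) (tvar n) e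
  | nat {k : ℕ} {e : Expr} : HasNormalForm e → Interp (k + 1) tnat e
  | bullet {k : ℕ} {u : PseudoType} {e : Expr} : Interp k u e → Interp (k + 1) (tbullet u) e
  | prod {k : ℕ} {A B : PseudoType} {e : Expr} : HasNormalForm e →
      Interp (k + 1) A (.app (.const .cfst) e) → Interp (k + 1) B (.app (.const .csnd) e) →
      Interp (k + 1) (tprod A B) e
  | arrow {k : ℕ} {A B : PseudoType} {e : Expr} : HasNormalForm e →
      (∀ j ≤ k + 1, ∀ a, (Guarded A → GuardedInterp j A a) → Interp j B (.app e a)) →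
      Interp (k + 1) (tarrow A B) e

namespace Interp

variable {k : ℕ} {t A B : PseudoType} {e : Expr}

lemma tarrow_inv (h : Interp (k + 1) (tarrow A B) e) :
    HasNormalForm e ∧
      ∀ j ≤ k + 1, ∀ a, (Guarded A → GuardedInterp j A a) → Interp j B (.app e a) := by
  generalize ht : tarrow A B = t at h
  cases h with
  | arrow hw hap => obtain ⟨rfl, rfl⟩ := tarrow_inj ht; exact ⟨hw, hap⟩
  | _ => exact absurd (congrArg (·.dest.1) ht) nofun

lemma tprod_inv (h : Interp (k + 1) (tprod A B) e) :
    HasNormalForm e ∧ Interp (k + 1) A (.app (.const .cfst) e) ∧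
      Interp (k + 1) B (.app (.const .csnd) e) := by
  generalize ht : tprod A B = t at h
  cases h with
  | prod hw h₁ h₂ => obtain ⟨rfl, rfl⟩ := tprod_inj ht; exact ⟨hw, h₁, h₂⟩
  | _ => exact absurd (congrArg (·.dest.1) ht) nofun

lemma tbullet_inv {u : PseudoType} (h : Interp (k + 1) (tbullet u) e) : Interp k u e := by
  generalize ht : tbullet u = t at h
  cases h with
  | bullet h => rwa [tbullet_inj ht]
  | _ => exact absurd (congrArg (·.dest.1) ht) nofun

lemma hasNormalForm (hnb : ¬ headIsBullet t) (h : Interp (k + 1) t e) : HasNormalForm e := by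
  cases h with
  | var _ hw | nat hw | prod hw _ _ | arrow hw _ => exact hw
  | bullet _ => exact absurd rfl hnb

lemma mono (h : Interp k t e) {j : ℕ} (hj : j ≤ k) : Interp j t e := by
  induction h generalizing j with
  | zero => rw [Nat.le_zero.mp hj]; exact .zero _ _
  | var n hw => cases j <;> first | exact .zero _ _ | exact .var n hw
  | nat hw => cases j <;> first | exact .zero _ _ | exact .nat hw
  | bullet _ ih => cases j <;> first | exact .zero _ _ | exact .bullet (ih (by omega))
  | prod hw _ _ ih₁ ih₂ => cases j <;> first | exact .zero _ _ | exact .prod hw (ih₁ hj) (ih₂ hj)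
  | arrow hw hap =>
    cases j <;> first | exact .zero _ _ | exact .arrow hw fun i hi => hap i (hi.trans hj)

lemma of_red {e' : Expr} (hr : Red e e') (h : Interp k t e') : Interp k t e := by
  induction h generalizing e with
  | zero => exact .zero _ _
  | var n hw => exact .var n (hw.of_red hr)
  | nat hw => exact .nat (hw.of_red hr)
  | bullet _ ih => exact .bullet (ih hr)
  | prod hw _ _ ih₁ ih₂ => exact .prod (hw.of_red hr) (ih₁ hr.fst) (ih₂ hr.snd)
  | arrow hw _ ih => exact .arrow (hw.of_red hr) fun j hj a ha => ih j hj a ha (hr.app a)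

lemma guardedInterp (h : Interp k t e) (hg : Guarded t) : GuardedInterp k t e := by
  induction h with
  | zero => exact guardedInterp_zero _ _
  | var n hw => exact (guardedInterp_tvar _ n _).2 hw
  | nat hw => exact (guardedInterp_tnat _ _).2 hw
  | bullet _ ih => exact (guardedInterp_tbullet hg _).2 (ih (hg.child (child_tbullet _)))
  | prod hw _ _ ih₁ ih₂ =>
    exact (guardedInterp_tprod hg _).2
      ⟨hw, ih₁ (hg.child (child_tprod_left _ _)), ih₂ (hg.child (child_tprod_right _ _))⟩
  | arrow hw _ ih =>
    exact (guardedInterp_tarrow hg _).2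
      ⟨hw, fun j hj a ha => ih j hj a (fun _ => ha) (hg.child (child_tarrow_right _ _))⟩

lemma of_guardedInterp (hg : Guarded t) (h : GuardedInterp k t e) : Interp k t e := by
  induction k, t, hg using Guarded.induction generalizing e with
  | zero => exact .zero _ _
  | var k n => exact .var n ((guardedInterp_tvar _ n e).1 h)
  | nat k => exact .nat ((guardedInterp_tnat _ e).1 h)
  | prod k A B hg ihA ihB =>
    obtain ⟨hw, h₁, h₂⟩ := (guardedInterp_tprod hg e).1 h
    exact .prod hw (ihA h₁) (ihB h₂)
  | arrow k A B hg _ ihB =>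
    obtain ⟨hw, hap⟩ := (guardedInterp_tarrow hg e).1 h
    exact .arrow hw fun j hj a ha => ihB j hj (hap j hj a (ha (hg.child (child_tarrow_left A B))))
  | bullet k u hg ih => exact .bullet (ih ((guardedInterp_tbullet hg e).1 h))

lemma of_neutral (hg : Guarded t) (he : Neutral e) : Interp k t e := by
  induction k, t, hg using Guarded.induction generalizing e with
  | zero => exact .zero _ _
  | var k n => exact .var n he.normalForm.hasNormalForm
  | nat k => exact .nat he.normalForm.hasNormalForm
  | prod k A B _ ihA ihB => exact .prod he.normalForm.hasNormalForm (ihA he.fst) (ihB he.snd)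
  | arrow k A B _ _ ihB =>
    exact .arrow he.normalForm.hasNormalForm fun j hj a _ => ihB j hj (he.app a)
  | bullet k u _ ih => exact .bullet (ih he)

lemma tbulletN_iff {m n : ℕ} : Interp (m + n) (tbulletN n t) e ↔ Interp m t e := by
  induction n with
  | zero => rfl
  | succ n ih =>
    rw [tbulletN_succ, ← Nat.add_assoc]
    exact ⟨fun h => ih.1 h.tbullet_inv, fun h => .bullet (ih.2 h)⟩

/-- Below level `n` the interpretation of `•ⁿ t` is everything. -/
lemma tbulletN_of_forall {n : ℕ} (h : ∀ m, m + 1 + n = k → Interp (m + 1) t e) :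
    Interp k (tbulletN n t) e := by
  induction n generalizing k with
  | zero =>
    cases k with
    | zero => exact .zero _ _
    | succ k => exact h k rfl
  | succ n ih =>
    cases k with
    | zero => exact .zero _ _
    | succ k => exact tbulletN_succ n t ▸ .bullet (ih fun m hm => h m (by omega))

lemma tarrow_of_forall (hA : Guarded A) (hw : HasNormalForm e)
    (h : ∀ j ≤ k, ∀ a, Interp (j + 1) A a → Interp (j + 1) B (.app e a)) :
    Interp (k + 1) (tarrow A B) e := by
  refine .arrow hw fun j hj a ha => ?_
  cases j with
  | zero => exact .zero _ _
  | succ j => exact h j (by omega) a (of_guardedInterp hA (ha hA))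

lemma of_kappaTy {c : Const} (hc : KappaTy c t) : Interp k t (.const c) := by
  cases k with
  | zero => exact .zero _ _
  | succ k =>
  cases hc with
  | zero => exact .nat (normalForm_const _).hasNormalForm
  | succ =>
    exact tarrow_of_forall guarded_tnat (normalForm_const _).hasNormalForm fun j _ a ha =>
      .nat (ha.hasNormalForm (by rintro ⟨⟩)).succ
  | pair hA hB =>
    refine tarrow_of_forall hA.2 (normalForm_const _).hasNormalForm fun j _ a ha => ?_
    refine tarrow_of_forall hB.2 (normalForm_pair_app a).hasNormalForm fun i hi b hb => ?_
    exact .prod (normalForm_mkPair a b).hasNormalForm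
      ((ha.mono (by omega)).of_red (HeadRed.fst a b).red) (hb.of_red (HeadRed.snd a b).red)
  | fst hA hB =>
    exact tarrow_of_forall (guarded_tprod hA.2 hB.2) (normalForm_const _).hasNormalForm
      fun _ _ p hp => hp.tprod_inv.2.1
  | snd hA hB =>
    exact tarrow_of_forall (guarded_tprod hA.2 hB.2) (normalForm_const _).hasNormalForm
      fun _ _ p hp => hp.tprod_inv.2.2

end Interp

section Soundness

def InterpCtx (k : ℕ) (Γ : Ctx) (ρ : ℕ → Expr) : Prop :=
  ∀ x u, Γ x = some u → IsType u → Interp k u (ρ x)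

lemma InterpCtx.mono {k j : ℕ} {Γ : Ctx} {ρ : ℕ → Expr} (h : InterpCtx k Γ ρ) (hj : j ≤ k) :
    InterpCtx j Γ ρ :=
  fun x u hx hu => (h x u hx hu).mono hj

lemma InterpCtx.cons {k n : ℕ} {Γ : Ctx} {ρ : ℕ → Expr} {A : PseudoType} {a : Expr}
    (h : InterpCtx (k + n) Γ ρ) (ha : Guarded A → GuardedInterp k A a) :
    InterpCtx (k + n) (Ctx.cons (tbulletN n A) Γ) (consSub a ρ) := by
  rintro (_ | x) u hx hu
  · obtain rfl := Option.some.inj hx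
    have hA := hu.2.of_tbulletN
    exact Interp.tbulletN_iff.2 (Interp.of_guardedInterp hA (ha hA))
  · exact h x u hx hu

theorem Types.interp {Γ : Ctx} {e : Expr} {t : PseudoType} (h : Types Γ e t) :
    ∀ k ρ, InterpCtx k Γ ρ → Interp k t (substE ρ e) := by
  induction h with
  | ax hx hu => exact fun k ρ hρ => hρ _ _ hx hu
  | const hc => exact fun k ρ _ => Interp.of_kappaTy hc
  | bulletI _ ih =>
    rintro (_ | k) ρ hρ
    · exact .zero _ _
    · exact .bullet (ih k ρ (hρ.mono k.le_succ))
  | @arrowI _ _ n _ _ _ ih =>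
    refine fun k ρ hρ => Interp.tbulletN_of_forall fun m hm => ?_
    refine .arrow (normalForm_lam _).hasNormalForm fun j hj a ha =>
      .of_red (HeadRed.beta _ a).red ?_
    rw [subst0_substE_liftSub]
    exact Interp.tbulletN_iff.1 (ih (j + n) _ ((hρ.mono (by omega)).cons ha))
  | arrowE _ _ ih₁ ih₂ =>
    refine fun k ρ hρ => Interp.tbulletN_of_forall fun m hm => ?_
    subst hm
    have hfun := Interp.tbulletN_iff.1 (ih₁ _ ρ hρ)
    have harg := Interp.tbulletN_iff.1 (ih₂ _ ρ hρ)
    exact hfun.tarrow_inv.2 (m + 1) le_rfl _ harg.guardedInterp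

end Soundness

/-- Normalisation of typable expressions: if `Γ ⊢ e : t` in
λ•→ and `t ≠ •^∞` then `e` reduces (in zero or more steps) to a (weak head)
normal form. -/
theorem normalisation (Γ : Ctx) (e : Expr) (t : PseudoType)
    (h : Types Γ e t) (hne : t ≠ binf) :
    ∃ f, RedStar e f ∧ NormalForm f := by
  obtain ⟨n, u, rfl, hu⟩ := exists_eq_tbulletN_of_ne_binf hne
  have hvar : InterpCtx (1 + n) Γ .var := fun x _ _ hty => Interp.of_neutral hty.2 (.var x)
  have he := h.interp (1 + n) .var hvar
  rw [substE_var] at he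
  exact (Interp.tbulletN_iff.1 he).hasNormalForm hu

end LambdaBullet
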